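/- Let x ∈ (0,∞)^V satisfy 𝕶_{G,V'}(x) ≥ 0 for every V' ⊆ V, with equality for at least one V'. Let V_0 ⊆ V be minimal with respect to inclusion among subsets V' with 𝕶_{G,V'}(x) = 0. Then every vertex of V \ V_0 is adjacent in G to every vertex of V_0; that is, G is the graph join of the induced subgraph on V_0 with the induced subgraph on V \ V_0. (Lemma 4.5.) -/

import Mathlib

open scoped Classical ENNReal

set_option linter.unusedSectionVars false

variable {V : Type*} [Fintype V] [DecidableEq V]

/-- An admissible swap exchanges two consecutive letters that are adjacent in `G`. -/
def AdjSwap (G : SimpleGraph V) (w w' : List V) : Prop :=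
  ∃ (a b : List V) (u v : V), G.Adj u v ∧ w = a ++ u :: v :: b ∧ w' = a ++ v :: u :: b

/-- Two words are equivalent if one can be transformed into the other by finitely many
admissible swaps. -/
def WordEquiv (G : SimpleGraph V) : List V → List V → Prop :=
  Relation.ReflTransGen (AdjSwap G)

lemma adjSwap_symm (G : SimpleGraph V) : Symmetric (AdjSwap G) := by
  rintro w w' ⟨a, b, u, v, h, rfl, rfl⟩
  exact ⟨a, b, v, u, h.symm, rfl, rfl⟩

/-- The setoid of words modulo admissible swaps. -/
def wordSetoid (G : SimpleGraph V) : Setoid (List V) where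
  r := WordEquiv G
  iseqv := ⟨fun _ => Relation.ReflTransGen.refl,
    fun h => by
      have h' : Relation.ReflTransGen (AdjSwap G) _ _ := h
      clear h
      induction h' with
      | refl => exact Relation.ReflTransGen.refl
      | tail _ hs ih => exact Relation.ReflTransGen.head (adjSwap_symm G hs) ih,
    fun h h' => Relation.ReflTransGen.trans h h'⟩

/-- A word is `G`-reduced if between any two equal letters there is a letter distinct from
them and not adjacent to them. -/
def IsGReduced (G : SimpleGraph V) (w : List V) : Prop :=
  ∀ i j : Fin w.length, i < j → w.get i = w.get j →
    ∃ k : Fin w.length, i < k ∧ k < j ∧ w.get k ≠ w.get i ∧ ¬ G.Adj (w.get k) (w.get i)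

/-- The product `x_{w_1} ⋯ x_{w_ℓ}` depends only on the equivalence class of a word. -/
noncomputable def classProd (G : SimpleGraph V) (x : V → ℝ≥0∞) :
    Quotient (wordSetoid G) → ℝ≥0∞ :=
  Quotient.lift (fun w : List V => (w.map x).prod) (by
    intro a b h
    induction h with
    | refl => rfl
    | tail _ hs ih =>
        obtain ⟨a', b', u, v, huv, rfl, rfl⟩ := hs
        rw [ih]
        simp only [List.map_append, List.prod_append, List.map_cons, List.prod_cons]
        ring)

/-- `tildeF G x` : the sum over all equivalence classes of words of `∏ x_{w_i}`,
valued in `[0,∞]`. -/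
noncomputable def tildeF (G : SimpleGraph V) (x : V → ℝ) : ℝ≥0∞ :=
  ∑' c : Quotient (wordSetoid G), classProd G (fun v => ENNReal.ofReal (x v)) c

/-- `redF G x` : the sum over all equivalence classes of `G`-reduced words of `∏ x_{w_i}`,
valued in `[0,∞]`. -/
noncomputable def redF (G : SimpleGraph V) (x : V → ℝ) : ℝ≥0∞ :=
  ∑' c : {c : Quotient (wordSetoid G) // ∃ w, IsGReduced G w ∧ Quotient.mk (wordSetoid G) w = c},
    classProd G (fun v => ENNReal.ofReal (x v)) c.1

/-- The clique polynomial `𝕶_{G,V'}(x) = ∑_{cliques K ⊆ V'} (-1)^{|K|} ∏_{v ∈ K} x_v`. -/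
noncomputable def cliquePoly (G : SimpleGraph V) (V' : Finset V) (x : V → ℝ) : ℝ :=
  ∑ K ∈ V'.powerset.filter (fun K : Finset V => G.IsClique (K : Set V)),
    (-1 : ℝ) ^ K.card * ∏ v ∈ K, x v

/-- The Euclidean norm on `ℝ^V`. -/
noncomputable def eucNorm (x : V → ℝ) : ℝ := Real.sqrt (∑ v, x v ^ 2)

/-- `min_{V' ⊆ V} 𝕶_{G,V'}(x)`. -/
noncomputable def minK (G : SimpleGraph V) (x : V → ℝ) : ℝ :=
  Finset.univ.inf' ⟨∅, Finset.mem_univ _⟩ fun V' : Finset V => cliquePoly G V' x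

/-- `ρ(u) = inf {r ∈ [0,∞) : min_{V' ⊆ V} 𝕶_{G,V'}(r·u) = 0}`. -/
noncomputable def rho (G : SimpleGraph V) (u : V → ℝ) : ℝ :=
  sInf {r : ℝ | 0 ≤ r ∧ minK G (r • u) = 0}

/-- The region `R(G) = {x ∈ [0,1]^V : 𝕶_{G,V'}(x) > 0 for all V' ⊆ V}`. -/
def regionR (G : SimpleGraph V) : Set (V → ℝ) :=
  {x | (∀ v, x v ∈ Set.Icc (0 : ℝ) 1) ∧ ∀ V' : Finset V, 0 < cliquePoly G V' x}

/-!
Splitting off a vertex `w ∉ S` gives `𝕶_{G,S ∪ {w}} = 𝕶_{G,S} - x_w 𝕶_{G,S ∩ N(w)}`, since a clique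
through `w` is `w` together with a clique of its neighbourhood. If `𝕶_{G,V₀} = 0`, nonnegativity of the
left side and `x_w > 0` force `𝕶_{G,V₀ ∩ N(w)} ≤ 0`, hence `= 0`, and minimality of `V₀` then gives
`V₀ ∩ N(w) = V₀`.
-/

lemma cliquePoly_eq_sum_powerset (G : SimpleGraph V) (S : Finset V) (x : V → ℝ) :
    cliquePoly G S x =
      ∑ K ∈ S.powerset, if G.IsClique (K : Set V) then (-1 : ℝ) ^ K.card * ∏ v ∈ K, x v else 0 :=
  Finset.sum_filter _ _

lemma cliquePoly_insert (G : SimpleGraph V) (x : V → ℝ) {w : V} {S : Finset V} (hw : w ∉ S) :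
    cliquePoly G (insert w S) x = cliquePoly G S x - x w * cliquePoly G (S.filter (G.Adj w)) x := by
  have hneighbours : cliquePoly G (S.filter (G.Adj w)) x = ∑ K ∈ S.powerset,
      if G.IsClique ((insert w K : Finset V) : Set V) then (-1 : ℝ) ^ K.card * ∏ v ∈ K, x v
      else 0 := by
    rw [cliquePoly, ← Finset.sum_filter]
    congr 1
    ext K
    simp only [Finset.mem_filter, Finset.mem_powerset, Finset.subset_iff, Finset.coe_insert]
    constructor
    · rintro ⟨hK, hclique⟩
      exact ⟨fun v hv => (hK hv).1, (G.isClique_insert_of_notMem fun hwK => hw (hK hwK).1).2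
        ⟨hclique, fun v hv => (hK hv).2⟩⟩
    · rintro ⟨hK, hclique⟩
      have := (G.isClique_insert_of_notMem fun hwK => hw (hK hwK)).1 hclique
      exact ⟨fun v hv => ⟨hK hv, this.2 v hv⟩, this.1⟩
  rw [hneighbours, cliquePoly_eq_sum_powerset G (insert w S), Finset.sum_powerset_insert hw,
    ← cliquePoly_eq_sum_powerset, sub_eq_add_neg, Finset.mul_sum, ← Finset.sum_neg_distrib]
  refine congrArg _ (Finset.sum_congr rfl fun K hK => ?_)
  have hwK : w ∉ K := fun h => hw (Finset.mem_powerset.mp hK h)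
  split_ifs
  · rw [Finset.card_insert_of_notMem hwK, Finset.prod_insert hwK]
    ring
  · simp

lemma cliquePoly_filter_adj_eq_zero (G : SimpleGraph V) {x : V → ℝ} {w : V} {S : Finset V}
    (hxw : 0 < x w) (hw : w ∉ S) (hS : cliquePoly G S x = 0)
    (hinsert : 0 ≤ cliquePoly G (insert w S) x) (hadj : 0 ≤ cliquePoly G (S.filter (G.Adj w)) x) :
    cliquePoly G (S.filter (G.Adj w)) x = 0 := by
  rw [cliquePoly_insert G x hw, hS, zero_sub, neg_nonneg] at hinsert
  exact le_antisymm (nonpos_of_mul_nonpos_right hinsert hxw) hadj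

/-- Lemma 4.5: if `x ∈ (0,∞)^V`, all `𝕶_{G,V'}(x) ≥ 0`, and `V₀` is minimal
with `𝕶_{G,V₀}(x) = 0`, then every vertex outside `V₀` is adjacent to every vertex of `V₀`. -/
theorem join_decomposition_of_minimal_zero (G : SimpleGraph V) (x : V → ℝ)
    (hx : ∀ v, 0 < x v)
    (hnonneg : ∀ V' : Finset V, 0 ≤ cliquePoly G V' x)
    (V₀ : Finset V) (hV₀ : cliquePoly G V₀ x = 0)
    (hmin : ∀ V' : Finset V, cliquePoly G V' x = 0 → V' ⊆ V₀ → V' = V₀) :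
    ∀ w ∉ V₀, ∀ v ∈ V₀, G.Adj w v := by
  intro w hw v hv
  have hzero := cliquePoly_filter_adj_eq_zero G (hx w) hw hV₀ (hnonneg _) (hnonneg _)
  have hV₀_adj : V₀.filter (G.Adj w) = V₀ := hmin _ hzero (Finset.filter_subset _ _)
  exact (Finset.mem_filter.mp (hV₀_adj.symm ▸ hv)).2
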